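/- Under the hypotheses of the F-family, if in addition 0.25 ≤ b ≤ 0.5 and 0.5 ≤ c ≤ 0.6 (with 0 ≤ a ≤ b), then the case R− holds, i.e. M̃ > M. (This combines the two cases b ∈ [0.25, 0.35] and b ∈ [0.35, 0.5].) -/

import Mathlib

/-!
Here `M = max (max (b/2) ((c-a)/2)) ((1-b)/2)` with `b/2 ≤ (1-b)/2`, so it suffices that the last
gap `ξ₄ - ξ₃` exceeds `(1-b)/2` and `(c-a)/2`. Comparing the signs of `F'` and of `5 ∏ (x - ξᵢ)` at
`x = a` and `x = b` gives `ξ₁ ≤ a` and `ξ₂ ≤ b`. A point `s ≥ b` where `F'` is negative therefore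
lies in `(ξ₃, ξ₄)`, and two such points `s < t` give `t - s < ξ₄ - ξ₃`. Pairs at distance
`(1-b)/2` and `(c-a)/2` are exhibited by polynomial inequalities valid on the whole parameter box.
-/

open Set

section Quartic

variable {ξ₁ ξ₂ ξ₃ ξ₄ x : ℝ}

lemma quartic_pos_of_lt (h₁₂ : ξ₁ ≤ ξ₂) (h₂₃ : ξ₂ ≤ ξ₃) (h₃₄ : ξ₃ ≤ ξ₄) (hx : x < ξ₁) :
    0 < (x - ξ₁) * (x - ξ₂) * (x - ξ₃) * (x - ξ₄) := by
  have h₁ : x - ξ₁ < 0 := sub_neg.2 hx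
  have h₂ : x - ξ₂ < 0 := sub_neg.2 (hx.trans_le h₁₂)
  have h₃ : x - ξ₃ < 0 := sub_neg.2 ((hx.trans_le h₁₂).trans_le h₂₃)
  have h₄ : x - ξ₄ < 0 := sub_neg.2 (((hx.trans_le h₁₂).trans_le h₂₃).trans_le h₃₄)
  exact mul_pos_of_neg_of_neg (mul_neg_of_pos_of_neg (mul_pos_of_neg_of_neg h₁ h₂) h₃) h₄

lemma quartic_neg_of_mem_Ioo (h₂₃ : ξ₂ ≤ ξ₃) (h₃₄ : ξ₃ ≤ ξ₄) (hx : x ∈ Ioo ξ₁ ξ₂) :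
    (x - ξ₁) * (x - ξ₂) * (x - ξ₃) * (x - ξ₄) < 0 := by
  have h₁ : 0 < x - ξ₁ := sub_pos.2 hx.1
  have h₂ : x - ξ₂ < 0 := sub_neg.2 hx.2
  have h₃ : x - ξ₃ < 0 := sub_neg.2 (hx.2.trans_le h₂₃)
  have h₄ : x - ξ₄ < 0 := sub_neg.2 ((hx.2.trans_le h₂₃).trans_le h₃₄)
  exact mul_neg_of_pos_of_neg (mul_pos_of_neg_of_neg (mul_neg_of_pos_of_neg h₁ h₂) h₃) h₄

lemma mem_Ioo_of_quartic_neg (h₁₂ : ξ₁ ≤ ξ₂) (h₃₄ : ξ₃ ≤ ξ₄) (hx : ξ₂ ≤ x)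
    (h : (x - ξ₁) * (x - ξ₂) * (x - ξ₃) * (x - ξ₄) < 0) : x ∈ Ioo ξ₃ ξ₄ := by
  have h₁₂' : 0 ≤ (x - ξ₁) * (x - ξ₂) := mul_nonneg (by linarith) (sub_nonneg.2 hx)
  rw [mul_assoc] at h
  rcases mul_neg_iff.1 (neg_of_mul_neg_right h h₁₂') with ⟨h₃, h₄⟩ | ⟨h₃, h₄⟩
  · exact ⟨sub_pos.1 h₃, sub_neg.1 h₄⟩
  · linarith

end Quartic

namespace FFamily

def derivative (a b c x : ℝ) : ℝ :=
  (x - a) * (x - b) * (x - c) * (x - 1) + x * (x - b) * (x - c) * (x - 1)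
    + x * (x - a) * (x - c) * (x - 1) + x * (x - a) * (x - b) * (x - 1)
    + x * (x - a) * (x - b) * (x - c)

theorem hasDerivAt (a b c x : ℝ) :
    HasDerivAt (fun t : ℝ => t * (t - a) * (t - b) * (t - c) * (t - 1)) (derivative a b c x) x := by
  have h := ((((hasDerivAt_id x).mul ((hasDerivAt_id x).sub_const a)).mul
    ((hasDerivAt_id x).sub_const b)).mul ((hasDerivAt_id x).sub_const c)).mul
    ((hasDerivAt_id x).sub_const 1)
  exact h.congr_deriv (by simp only [derivative, Pi.mul_apply, id_eq]; ring)

variable {a b c ξ₁ ξ₂ ξ₃ ξ₄ : ℝ}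

lemma root₁_le (ha : 0 ≤ a) (hab : a ≤ b) (hbc : b ≤ c) (hc : c ≤ 1)
    (hroots : ∀ x, derivative a b c x = 5 * ((x - ξ₁) * (x - ξ₂) * (x - ξ₃) * (x - ξ₄)))
    (h₁₂ : ξ₁ ≤ ξ₂) (h₂₃ : ξ₂ ≤ ξ₃) (h₃₄ : ξ₃ ≤ ξ₄) : ξ₁ ≤ a := by
  by_contra! h
  have hFa : derivative a b c a = a * ((b - a) * (c - a)) * (a - 1) := by
    simp only [derivative]; ring
  have hFa_nonpos : derivative a b c a ≤ 0 := hFa ▸ mul_nonpos_of_nonneg_of_nonpos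
    (mul_nonneg ha (mul_nonneg (by linarith) (by linarith))) (by linarith)
  have := quartic_pos_of_lt h₁₂ h₂₃ h₃₄ h
  linarith [hroots a]

lemma root₂_le (ha : 0 ≤ a) (hab : a ≤ b) (hbc : b ≤ c) (hc : c ≤ 1)
    (hroots : ∀ x, derivative a b c x = 5 * ((x - ξ₁) * (x - ξ₂) * (x - ξ₃) * (x - ξ₄)))
    (h₁₂ : ξ₁ ≤ ξ₂) (h₂₃ : ξ₂ ≤ ξ₃) (h₃₄ : ξ₃ ≤ ξ₄) : ξ₂ ≤ b := by
  by_contra! hb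
  have h₁ : ξ₁ ≤ a := root₁_le ha hab hbc hc hroots h₁₂ h₂₃ h₃₄
  have hb₃ : b < ξ₃ := hb.trans_le h₂₃
  have hb₄ : b < ξ₄ := hb₃.trans_le h₃₄
  rcases (h₁.trans hab).lt_or_eq with h₁b | rfl
  · have hFb : derivative a b c b = b * (b - a) * ((c - b) * (1 - b)) := by
      simp only [derivative]; ring
    have hFb_nonneg : 0 ≤ derivative a b c b := hFb ▸ mul_nonneg
      (mul_nonneg (by linarith) (by linarith)) (mul_nonneg (by linarith) (by linarith))
    have := quartic_neg_of_mem_Ioo h₂₃ h₃₄ ⟨h₁b, hb⟩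
    linarith [hroots b]
  · obtain rfl : a = ξ₁ := le_antisymm hab h₁
    -- `a = b = ξ₁` is a double root of `F`; dividing out `x - a` leaves a cubic identity, whose
    -- value at `a` is recovered from those at `a + 1, …, a + 4` (fourth differences of a cubic vanish).
    have hcubic : 2 * a * (a - c) * (a - 1) = 5 * ((a - ξ₂) * (a - ξ₃) * (a - ξ₄)) := by
      simp only [derivative] at hroots
      linear_combination 4 * hroots (a + 1) - 3 * hroots (a + 2) + 4 / 3 * hroots (a + 3)
        - 1 / 4 * hroots (a + 4)
    have hlhs : 0 ≤ 2 * a * (a - c) * (a - 1) :=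
      mul_nonneg_of_nonpos_of_nonpos (mul_nonpos_of_nonneg_of_nonpos (by linarith) (by linarith))
        (by linarith)
    have hrhs : (a - ξ₂) * (a - ξ₃) * (a - ξ₄) < 0 :=
      mul_neg_of_pos_of_neg (mul_pos_of_neg_of_neg (by linarith) (by linarith)) (by linarith)
    linarith

def NegPair (a b c δ : ℝ) : Prop :=
  ∃ s, b ≤ s ∧ derivative a b c s < 0 ∧ derivative a b c (s + δ) < 0

lemma NegPair.lt_root₄_sub_root₃ {δ : ℝ} (hneg : NegPair a b c δ) (hδ : 0 ≤ δ)
    (hroots : ∀ x, derivative a b c x = 5 * ((x - ξ₁) * (x - ξ₂) * (x - ξ₃) * (x - ξ₄)))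
    (h₁₂ : ξ₁ ≤ ξ₂) (h₃₄ : ξ₃ ≤ ξ₄) (hξ₂ : ξ₂ ≤ b) : δ < ξ₄ - ξ₃ := by
  obtain ⟨s, hs, hFs, hFt⟩ := hneg
  have hs' := mem_Ioo_of_quartic_neg h₁₂ h₃₄ (hξ₂.trans hs) (by linarith [hroots s])
  have ht' := mem_Ioo_of_quartic_neg (x := s + δ) h₁₂ h₃₄ (by linarith)
    (by linarith [hroots (s + δ)])
  linarith [hs'.1, ht'.2]

-- The affine test points are numerical fits: `s` sits just above `ξ₃` and `s + δ` just below `ξ₄`.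
lemma negPair_half_one_sub_b_of_b_le (ha : 0 ≤ a) (hab : a ≤ b) (hbc : b ≤ c)
    (hb₁ : 0.25 ≤ b) (hb₂ : b ≤ 0.35) (hc₁ : 0.5 ≤ c) (hc₂ : c ≤ 0.6) :
    NegPair a b c ((1 - b) / 2) := by
  refine ⟨0.16 + 0.07 * a + 0.36 * b + 0.38 * c, by linarith, ?_, ?_⟩ <;>
    simp only [derivative] <;>
    nlinarith [mul_nonneg ha (sub_nonneg.2 hab), mul_nonneg (sub_nonneg.2 hab) (sub_nonneg.2 hbc),
      mul_nonneg ha (sub_nonneg.2 hbc), mul_nonneg (sub_nonneg.2 hb₁) (sub_nonneg.2 hb₂),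
      mul_nonneg (sub_nonneg.2 hc₁) (sub_nonneg.2 hc₂),
      sq_nonneg (a - 0.2), sq_nonneg (b - 0.37), sq_nonneg (c - 0.55)]

lemma negPair_half_one_sub_b_of_le_b (ha : 0 ≤ a) (hab : a ≤ b) (hbc : b ≤ c)
    (hb₁ : 0.35 ≤ b) (hb₂ : b ≤ 0.5) (hc₁ : 0.5 ≤ c) (hc₂ : c ≤ 0.6) :
    NegPair a b c ((1 - b) / 2) := by
  refine ⟨0.16 + 0.06 * a + 0.41 * b + 0.37 * c, by linarith, ?_, ?_⟩ <;>
    simp only [derivative] <;>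
    nlinarith [mul_nonneg ha (sub_nonneg.2 hab), mul_nonneg (sub_nonneg.2 hab) (sub_nonneg.2 hbc),
      mul_nonneg ha (sub_nonneg.2 hbc), mul_nonneg (sub_nonneg.2 hb₁) (sub_nonneg.2 hb₂),
      mul_nonneg (sub_nonneg.2 hc₁) (sub_nonneg.2 hc₂),
      sq_nonneg (a - 0.2), sq_nonneg (b - 0.37), sq_nonneg (c - 0.55)]

lemma negPair_half_c_sub_a (ha : 0 ≤ a) (hab : a ≤ b) (hbc : b ≤ c)
    (hb₁ : 0.25 ≤ b) (hb₂ : b ≤ 0.5) (hc₁ : 0.5 ≤ c) (hc₂ : c ≤ 0.6) :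
    NegPair a b c ((c - a) / 2) := by
  refine ⟨0.35 + 0.25 * a + 0.26 * b + 0.16 * c, by linarith, ?_, ?_⟩ <;>
    simp only [derivative] <;>
    nlinarith [mul_nonneg ha (sub_nonneg.2 hab), mul_nonneg (sub_nonneg.2 hab) (sub_nonneg.2 hbc),
      mul_nonneg ha (sub_nonneg.2 hbc), mul_nonneg (sub_nonneg.2 hb₁) (sub_nonneg.2 hb₂),
      mul_nonneg (sub_nonneg.2 hc₁) (sub_nonneg.2 hc₂),
      sq_nonneg (a - 0.2), sq_nonneg (b - 0.37), sq_nonneg (c - 0.55)]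

end FFamily

/-- For `F(x) = x(x-a)(x-b)(x-c)(x-1)` with `0 ≤ a ≤ b ≤ c ≤ 1`, `0.25 ≤ b ≤ 0.5` and
`0.5 ≤ c ≤ 0.6`, the case R− holds: `M̃ > M`. -/
theorem F_family_S5_S6_Rminus
    (a b c : ℝ) (ha : 0 ≤ a) (hab : a ≤ b) (hbc : b ≤ c) (hc1 : c ≤ 1)
    (hb1 : 0.25 ≤ b) (hb2 : b ≤ 0.5) (hclo : 0.5 ≤ c) (hchi : c ≤ 0.6)
    (ξ₁ ξ₂ ξ₃ ξ₄ : ℝ) (hξ12 : ξ₁ ≤ ξ₂) (hξ23 : ξ₂ ≤ ξ₃) (hξ34 : ξ₃ ≤ ξ₄)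
    (hder : ∀ x : ℝ,
      deriv (fun t : ℝ => t * (t - a) * (t - b) * (t - c) * (t - 1)) x
        = 5 * (x - ξ₁) * (x - ξ₂) * (x - ξ₃) * (x - ξ₄))
    (z₁ z₂ z₃ z₄ M Mt : ℝ)
    (hz₁ : z₁ = a / 2) (hz₂ : z₂ = (a + b) / 2)
    (hz₃ : z₃ = (b + c) / 2) (hz₄ : z₄ = (c + 1) / 2)
    (hM : M = max (max (z₂ - z₁) (z₃ - z₂)) (z₄ - z₃))
    (hMt : Mt = max (max (ξ₂ - ξ₁) (ξ₃ - ξ₂)) (ξ₄ - ξ₃)) :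
    Mt > M := by
  have hroots (x : ℝ) :
      FFamily.derivative a b c x = 5 * ((x - ξ₁) * (x - ξ₂) * (x - ξ₃) * (x - ξ₄)) :=
    (FFamily.hasDerivAt a b c x).deriv.symm.trans ((hder x).trans (by ring))
  have hξ₂ : ξ₂ ≤ b := FFamily.root₂_le ha hab hbc hc1 hroots hξ12 hξ23 hξ34
  have hgap₁ : (1 - b) / 2 < ξ₄ - ξ₃ := by
    refine FFamily.NegPair.lt_root₄_sub_root₃ ?_ (by linarith) hroots hξ12 hξ34 hξ₂
    rcases le_total b 0.35 with hb | hb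
    · exact FFamily.negPair_half_one_sub_b_of_b_le ha hab hbc hb1 hb hclo hchi
    · exact FFamily.negPair_half_one_sub_b_of_le_b ha hab hbc hb hb2 hclo hchi
  have hgap₂ : (c - a) / 2 < ξ₄ - ξ₃ :=
    (FFamily.negPair_half_c_sub_a ha hab hbc hb1 hb2 hclo hchi).lt_root₄_sub_root₃
      (by linarith) hroots hξ12 hξ34 hξ₂
  have hgap_le : ξ₄ - ξ₃ ≤ Mt := hMt ▸ le_max_right _ _
  subst hM hz₁ hz₂ hz₃ hz₄
  exact max_lt (max_lt (by linarith) (by linarith)) (by linarith)
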